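/- arXiv:2303.06952 — 3 statements merged into one kernel-verified Lean document; each statement's English description precedes it below -/
import Mathlib

section
/- In a category C equipped with a pre-differential structure satisfying (Dproj-lin) and (D-chain), the following are equivalent: (1) θ is natural with respect to D, i.e. D f ∘ θ = θ ∘ D²f for all f; (2) for any f ∈ C(X, Y), (∂f ∘ D π₀) ⊞ (∂f ∘ π₀) and ∂f ∘ θ = ∂f ∘ D π₀ + ∂f ∘ π₀; (3) for any f ∈ C(X, Y), any object U and any x, u, v ∈ C(U, X) such that the family (x, u, v) is summable, (∂f ∘ ⟨x, u⟩) ⊞ (∂f ∘ ⟨x, v⟩) and ∂f ∘ ⟨x, u + v⟩ = ∂f ∘ ⟨x, u⟩ + ∂f ∘ ⟨x, v⟩. -/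
open CategoryTheory CategoryTheory.Limits
open scoped Classical

universe v u

/-- A summable pairing structure on a category `C` whose hom-sets carry a
distinguished morphism `0` satisfying `0 ∘ f = 0`. -/
structure SummablePairing (C : Type u) [Category.{v} C] where
  /-- the distinguished zero morphism of each hom-set -/
  zero : ∀ X Y : C, X ⟶ Y
  /-- `0 ∘ f = 0` -/
  comp_zero : ∀ {X Y Z : C} (f : X ⟶ Y), f ≫ zero Y Z = zero X Z
  /-- the map on objects -/
  D : C → C
  p0 : ∀ X : C, D X ⟶ X
  p1 : ∀ X : C, D X ⟶ X
  s : ∀ X : C, D X ⟶ X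
  /-- `p0` and `p1` are jointly monic -/
  jointly_monic : ∀ {Y X : C} {f g : Y ⟶ D X},
    f ≫ p0 X = g ≫ p0 X → f ≫ p1 X = g ≫ p1 X → f = g

namespace SummablePairing

variable {C : Type u} [Category.{v} C]

/-- `f0 ⊞ f1` : summability of two parallel morphisms. -/
def Summable (S : SummablePairing C) {X Y : C} (f0 f1 : X ⟶ Y) : Prop :=
  ∃ w : X ⟶ S.D Y, w ≫ S.p0 Y = f0 ∧ w ≫ S.p1 Y = f1

/-- the witness `⟨f0, f1⟩` of a summable pair (an arbitrary default otherwise) -/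
noncomputable def wit (S : SummablePairing C) {X Y : C} (f0 f1 : X ⟶ Y) : X ⟶ S.D Y :=
  if h : S.Summable f0 f1 then h.choose else S.zero X (S.D Y)

/-- the sum `f0 + f1` of a summable pair -/
noncomputable def add (S : SummablePairing C) {X Y : C} (f0 f1 : X ⟶ Y) : X ⟶ Y :=
  S.wit f0 f1 ≫ S.s Y

/-- additive morphisms -/
def Additive (S : SummablePairing C) {Y Z : C} (h : Y ⟶ Z) : Prop :=
  (∀ X : C, S.zero X Y ≫ h = S.zero X Z) ∧
  (∀ (X : C) (f0 f1 : X ⟶ Y), S.Summable f0 f1 →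
    S.Summable (f0 ≫ h) (f1 ≫ h) ∧ S.add f0 f1 ≫ h = S.add (f0 ≫ h) (f1 ≫ h))

/-- a left pre-summability structure: `p0`, `p1` and `s` are additive -/
def IsLeftPreSummability (S : SummablePairing C) : Prop :=
  (∀ X : C, S.Additive (S.p0 X)) ∧ (∀ X : C, S.Additive (S.p1 X)) ∧
  (∀ X : C, S.Additive (S.s X))

/-- axiom (D-com) -/
def Dcom (S : SummablePairing C) : Prop :=
  ∀ X : C, S.Summable (S.p1 X) (S.p0 X) ∧ S.add (S.p1 X) (S.p0 X) = S.s X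

/-- axiom (D-zero) -/
def Dzero (S : SummablePairing C) : Prop :=
  ∀ X : C, S.Summable (𝟙 X) (S.zero X X) ∧ S.Summable (S.zero X X) (𝟙 X) ∧
    S.add (𝟙 X) (S.zero X X) = 𝟙 X ∧ S.add (S.zero X X) (𝟙 X) = 𝟙 X

/-- axiom (D-witness) -/
def Dwitness (S : SummablePairing C) : Prop :=
  ∀ (Y X : C) (f g : Y ⟶ S.D X),
    S.Summable (f ≫ S.s X) (g ≫ S.s X) → S.Summable f g

/-- a left summability structure -/
def IsLeftSummability (S : SummablePairing C) : Prop :=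
  S.IsLeftPreSummability ∧ S.Dcom ∧ S.Dzero ∧ S.Dwitness

/-- `ι₀ = ⟨id, 0⟩` -/
noncomputable def iota0 (S : SummablePairing C) (X : C) : X ⟶ S.D X :=
  S.wit (𝟙 X) (S.zero X X)

/-- `θ = ⟨π₀ ∘ π₀, π₁ ∘ π₀ + π₀ ∘ π₁⟩` -/
noncomputable def theta (S : SummablePairing C) (X : C) : S.D (S.D X) ⟶ S.D X :=
  S.wit (S.p0 (S.D X) ≫ S.p0 X)
    (S.add (S.p0 (S.D X) ≫ S.p1 X) (S.p1 (S.D X) ≫ S.p0 X))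

/-- `l = ⟨⟨π₀, 0⟩, ⟨0, π₁⟩⟩` -/
noncomputable def lmor (S : SummablePairing C) (X : C) : S.D X ⟶ S.D (S.D X) :=
  S.wit (S.wit (S.p0 X) (S.zero (S.D X) X)) (S.wit (S.zero (S.D X) X) (S.p1 X))

/-- `c = ⟨⟨π₀ ∘ π₀, π₀ ∘ π₁⟩, ⟨π₁ ∘ π₀, π₁ ∘ π₁⟩⟩` -/
noncomputable def cmor (S : SummablePairing C) (X : C) : S.D (S.D X) ⟶ S.D (S.D X) :=
  S.wit (S.wit (S.p0 (S.D X) ≫ S.p0 X) (S.p1 (S.D X) ≫ S.p0 X))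
        (S.wit (S.p0 (S.D X) ≫ S.p1 X) (S.p1 (S.D X) ≫ S.p1 X))

end SummablePairing

/-- summability of a finite family of morphisms (represented as a multiset),
together with its sum, defined inductively -/
inductive SummablePairing.MSummable {C : Type u} [Category.{v} C] (S : SummablePairing C) :
    ∀ {X Y : C}, Multiset (X ⟶ Y) → (X ⟶ Y) → Prop
  | nil {X Y : C} : SummablePairing.MSummable S (0 : Multiset (X ⟶ Y)) (S.zero X Y)
  | cons {X Y : C} {m : Multiset (X ⟶ Y)} {t f : X ⟶ Y} :
      SummablePairing.MSummable S m t → S.Summable t f →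
      SummablePairing.MSummable S (f ::ₘ m) (S.add t f)

/-- the data making a left summability structure a pre-differential structure:
an operator `D` on morphisms with `π₀ ∘ D f = f ∘ π₀` -/
structure DiffOp {C : Type u} [Category.{v} C] (S : SummablePairing C) where
  map : ∀ {X Y : C}, (X ⟶ Y) → (S.D X ⟶ S.D Y)
  map_p0 : ∀ {X Y : C} (f : X ⟶ Y), map f ≫ S.p0 Y = S.p0 X ≫ f

namespace DiffOp

variable {C : Type u} [Category.{v} C] {S : SummablePairing C}

/-- the differential `∂f = π₁ ∘ D f` -/
def dd (Dm : DiffOp S) {X Y : C} (f : X ⟶ Y) : S.D X ⟶ Y := Dm.map f ≫ S.p1 Y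

/-- D-linear morphisms -/
def DLinear (Dm : DiffOp S) {X Y : C} (f : X ⟶ Y) : Prop :=
  Dm.map f ≫ S.p1 Y = S.p1 X ≫ f ∧ Dm.map f ≫ S.s Y = S.s X ≫ f ∧
  (∀ U : C, S.zero U X ≫ f = S.zero U Y)

/-- axiom (Dproj-lin) -/
def DprojLin (Dm : DiffOp S) : Prop :=
  (∀ X : C, Dm.DLinear (S.p0 X)) ∧ (∀ X : C, Dm.DLinear (S.p1 X))

/-- axiom (Dsum-lin) -/
def DsumLin (Dm : DiffOp S) : Prop :=
  (∀ X : C, Dm.DLinear (S.s X)) ∧ (∀ X Y : C, Dm.DLinear (S.zero X Y))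

/-- axiom (D-chain): functoriality -/
def Dchain (Dm : DiffOp S) : Prop :=
  (∀ X : C, Dm.map (𝟙 X) = 𝟙 (S.D X)) ∧
  (∀ (X Y Z : C) (f : X ⟶ Y) (g : Y ⟶ Z), Dm.map (f ≫ g) = Dm.map f ≫ Dm.map g)

/-- axiom (D-add): naturality of `ι₀` and `θ` -/
def Dadd (Dm : DiffOp S) : Prop :=
  (∀ (X Y : C) (f : X ⟶ Y), S.iota0 X ≫ Dm.map f = f ≫ S.iota0 Y) ∧
  (∀ (X Y : C) (f : X ⟶ Y), S.theta X ≫ Dm.map f = Dm.map (Dm.map f) ≫ S.theta Y)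

/-- axiom (D-lin): naturality of `l` -/
def Dlin (Dm : DiffOp S) : Prop :=
  ∀ (X Y : C) (f : X ⟶ Y), Dm.map f ≫ S.lmor Y = S.lmor X ≫ Dm.map (Dm.map f)

/-- axiom (D-Schwarz): naturality of `c` -/
def Dschwarz (Dm : DiffOp S) : Prop :=
  ∀ (X Y : C) (f : X ⟶ Y),
    S.cmor X ≫ Dm.map (Dm.map f) = Dm.map (Dm.map f) ≫ S.cmor Y

end DiffOp


namespace StmtAux

open CategoryTheory SummablePairing

variable {C : Type u} [Category.{v} C] {S : SummablePairing C}

lemma wit_p0 {X Y : C} {f0 f1 : X ⟶ Y} (h : S.Summable f0 f1) :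
    S.wit f0 f1 ≫ S.p0 Y = f0 := by
  rw [SummablePairing.wit, dif_pos h]; exact h.choose_spec.1

lemma wit_p1 {X Y : C} {f0 f1 : X ⟶ Y} (h : S.Summable f0 f1) :
    S.wit f0 f1 ≫ S.p1 Y = f1 := by
  rw [SummablePairing.wit, dif_pos h]; exact h.choose_spec.2

lemma summable_of_wit {X Y : C} {f0 f1 : X ⟶ Y} {w : X ⟶ S.D Y}
    (h0 : w ≫ S.p0 Y = f0) (h1 : w ≫ S.p1 Y = f1) : S.Summable f0 f1 := ⟨w, h0, h1⟩

lemma wit_eq {X Y : C} {f0 f1 : X ⟶ Y} {w : X ⟶ S.D Y}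
    (h0 : w ≫ S.p0 Y = f0) (h1 : w ≫ S.p1 Y = f1) : S.wit f0 f1 = w := by
  have hs : S.Summable f0 f1 := ⟨w, h0, h1⟩
  exact S.jointly_monic (by rw [wit_p0 hs, h0]) (by rw [wit_p1 hs, h1])

lemma add_def {X Y : C} (f0 f1 : X ⟶ Y) : S.add f0 f1 = S.wit f0 f1 ≫ S.s Y := rfl

lemma summable_precomp {U X Y : C} (g : U ⟶ X) {f0 f1 : X ⟶ Y} (h : S.Summable f0 f1) :
    S.Summable (g ≫ f0) (g ≫ f1) :=
  ⟨g ≫ S.wit f0 f1, by rw [Category.assoc, wit_p0 h], by rw [Category.assoc, wit_p1 h]⟩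

lemma wit_precomp {U X Y : C} (g : U ⟶ X) {f0 f1 : X ⟶ Y} (h : S.Summable f0 f1) :
    S.wit (g ≫ f0) (g ≫ f1) = g ≫ S.wit f0 f1 :=
  wit_eq (by rw [Category.assoc, wit_p0 h]) (by rw [Category.assoc, wit_p1 h])

lemma add_precomp {U X Y : C} (g : U ⟶ X) {f0 f1 : X ⟶ Y} (h : S.Summable f0 f1) :
    S.add (g ≫ f0) (g ≫ f1) = g ≫ S.add f0 f1 := by
  rw [add_def, add_def, wit_precomp g h, Category.assoc]

/-- the second injection -/
noncomputable def iota1 (S : SummablePairing C) (X : C) : X ⟶ S.D X :=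
  S.wit (S.zero X X) (𝟙 X)

section
variable (hS : S.IsLeftSummability)
include hS

lemma iota0_p0 (X : C) : S.iota0 X ≫ S.p0 X = 𝟙 X := wit_p0 (hS.2.2.1 X).1
lemma iota0_p1 (X : C) : S.iota0 X ≫ S.p1 X = S.zero X X := wit_p1 (hS.2.2.1 X).1
lemma iota0_s (X : C) : S.iota0 X ≫ S.s X = 𝟙 X := by
  have := (hS.2.2.1 X).2.2.1
  rwa [add_def] at this

lemma iota1_p0 (X : C) : iota1 S X ≫ S.p0 X = S.zero X X := wit_p0 (hS.2.2.1 X).2.1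
lemma iota1_p1 (X : C) : iota1 S X ≫ S.p1 X = 𝟙 X := wit_p1 (hS.2.2.1 X).2.1
lemma iota1_s (X : C) : iota1 S X ≫ S.s X = 𝟙 X := by
  have := (hS.2.2.1 X).2.2.2
  rwa [add_def] at this

lemma summable_zero_right {U X : C} (f : U ⟶ X) : S.Summable f (S.zero U X) :=
  summable_of_wit (w := f ≫ S.iota0 X)
    (by rw [Category.assoc, iota0_p0 hS, Category.comp_id])
    (by rw [Category.assoc, iota0_p1 hS, S.comp_zero])

lemma add_zero_right {U X : C} (f : U ⟶ X) : S.add f (S.zero U X) = f := by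
  rw [add_def, wit_eq (w := f ≫ S.iota0 X)
    (by rw [Category.assoc, iota0_p0 hS, Category.comp_id])
    (by rw [Category.assoc, iota0_p1 hS, S.comp_zero]),
    Category.assoc, iota0_s hS, Category.comp_id]

lemma summable_zero_left {U X : C} (f : U ⟶ X) : S.Summable (S.zero U X) f :=
  summable_of_wit (w := f ≫ iota1 S X)
    (by rw [Category.assoc, iota1_p0 hS, S.comp_zero])
    (by rw [Category.assoc, iota1_p1 hS, Category.comp_id])

lemma add_zero_left {U X : C} (f : U ⟶ X) : S.add (S.zero U X) f = f := by
  rw [add_def, wit_eq (w := f ≫ iota1 S X)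
    (by rw [Category.assoc, iota1_p0 hS, S.comp_zero])
    (by rw [Category.assoc, iota1_p1 hS, Category.comp_id]),
    Category.assoc, iota1_s hS, Category.comp_id]

lemma summable_comm {X Y : C} {f0 f1 : X ⟶ Y} (h : S.Summable f0 f1) :
    S.Summable f1 f0 :=
  summable_of_wit (w := S.wit f0 f1 ≫ S.wit (S.p1 Y) (S.p0 Y))
    (by rw [Category.assoc, wit_p0 (hS.2.1 Y).1, wit_p1 h])
    (by rw [Category.assoc, wit_p1 (hS.2.1 Y).1, wit_p0 h])

lemma add_comm' {X Y : C} {f0 f1 : X ⟶ Y} (h : S.Summable f0 f1) :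
    S.add f1 f0 = S.add f0 f1 := by
  have hw : S.wit f1 f0 = S.wit f0 f1 ≫ S.wit (S.p1 Y) (S.p0 Y) :=
    wit_eq (by rw [Category.assoc, wit_p0 (hS.2.1 Y).1, wit_p1 h])
      (by rw [Category.assoc, wit_p1 (hS.2.1 Y).1, wit_p0 h])
  have hts : S.wit (S.p1 Y) (S.p0 Y) ≫ S.s Y = S.s Y := by
    have := (hS.2.1 Y).2
    rwa [add_def] at this
  rw [add_def, hw, Category.assoc, hts, ← add_def]

lemma summable_post_p0 {U X : C} {f0 f1 : U ⟶ S.D X} (h : S.Summable f0 f1) :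
    S.Summable (f0 ≫ S.p0 X) (f1 ≫ S.p0 X) := ((hS.1.1 X).2 U f0 f1 h).1

lemma add_post_p0 {U X : C} {f0 f1 : U ⟶ S.D X} (h : S.Summable f0 f1) :
    S.add f0 f1 ≫ S.p0 X = S.add (f0 ≫ S.p0 X) (f1 ≫ S.p0 X) := ((hS.1.1 X).2 U f0 f1 h).2

lemma summable_post_p1 {U X : C} {f0 f1 : U ⟶ S.D X} (h : S.Summable f0 f1) :
    S.Summable (f0 ≫ S.p1 X) (f1 ≫ S.p1 X) := ((hS.1.2.1 X).2 U f0 f1 h).1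

lemma add_post_p1 {U X : C} {f0 f1 : U ⟶ S.D X} (h : S.Summable f0 f1) :
    S.add f0 f1 ≫ S.p1 X = S.add (f0 ≫ S.p1 X) (f1 ≫ S.p1 X) := ((hS.1.2.1 X).2 U f0 f1 h).2

lemma summable_post_s {U X : C} {f0 f1 : U ⟶ S.D X} (h : S.Summable f0 f1) :
    S.Summable (f0 ≫ S.s X) (f1 ≫ S.s X) := ((hS.1.2.2 X).2 U f0 f1 h).1

lemma add_post_s {U X : C} {f0 f1 : U ⟶ S.D X} (h : S.Summable f0 f1) :
    S.add f0 f1 ≫ S.s X = S.add (f0 ≫ S.s X) (f1 ≫ S.s X) := ((hS.1.2.2 X).2 U f0 f1 h).2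

lemma assocL {U X : C} {x y z : U ⟶ X} (hxy : S.Summable x y)
    (hz : S.Summable (S.add x y) z) :
    S.Summable y z ∧ S.Summable x (S.add y z) ∧
      S.add x (S.add y z) = S.add (S.add x y) z := by
  have hw2p0 : (z ≫ iota1 S X) ≫ S.p0 X = S.zero U X := by
    rw [Category.assoc, iota1_p0 hS, S.comp_zero]
  have hw2p1 : (z ≫ iota1 S X) ≫ S.p1 X = z := by
    rw [Category.assoc, iota1_p1 hS, Category.comp_id]
  have hw2s : (z ≫ iota1 S X) ≫ S.s X = z := by
    rw [Category.assoc, iota1_s hS, Category.comp_id]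
  have hsum : S.Summable (S.wit x y) (z ≫ iota1 S X) :=
    hS.2.2.2 _ _ _ _ (by rw [hw2s, ← add_def]; exact hz)
  have hyz : S.Summable y z := by
    have := summable_post_p1 hS hsum
    rwa [wit_p1 hxy, hw2p1] at this
  have hAp0 : S.add (S.wit x y) (z ≫ iota1 S X) ≫ S.p0 X = x := by
    rw [add_post_p0 hS hsum, wit_p0 hxy, hw2p0, add_zero_right hS]
  have hAp1 : S.add (S.wit x y) (z ≫ iota1 S X) ≫ S.p1 X = S.add y z := by
    rw [add_post_p1 hS hsum, wit_p1 hxy, hw2p1]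
  refine ⟨hyz, summable_of_wit hAp0 hAp1, ?_⟩
  rw [add_def x, wit_eq hAp0 hAp1, add_post_s hS hsum, hw2s, ← add_def]

lemma assocR {U X : C} {x y z : U ⟶ X} (hyz : S.Summable y z)
    (hx : S.Summable x (S.add y z)) :
    S.Summable x y ∧ S.Summable (S.add x y) z ∧
      S.add (S.add x y) z = S.add x (S.add y z) := by
  have hw1p0 : (x ≫ S.iota0 X) ≫ S.p0 X = x := by
    rw [Category.assoc, iota0_p0 hS, Category.comp_id]
  have hw1p1 : (x ≫ S.iota0 X) ≫ S.p1 X = S.zero U X := by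
    rw [Category.assoc, iota0_p1 hS, S.comp_zero]
  have hw1s : (x ≫ S.iota0 X) ≫ S.s X = x := by
    rw [Category.assoc, iota0_s hS, Category.comp_id]
  have hsum : S.Summable (x ≫ S.iota0 X) (S.wit y z) :=
    hS.2.2.2 _ _ _ _ (by rw [hw1s, ← add_def]; exact hx)
  have hxy : S.Summable x y := by
    have := summable_post_p0 hS hsum
    rwa [wit_p0 hyz, hw1p0] at this
  have hAp0 : S.add (x ≫ S.iota0 X) (S.wit y z) ≫ S.p0 X = S.add x y := by
    rw [add_post_p0 hS hsum, wit_p0 hyz, hw1p0]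
  have hAp1 : S.add (x ≫ S.iota0 X) (S.wit y z) ≫ S.p1 X = z := by
    rw [add_post_p1 hS hsum, wit_p1 hyz, hw1p1, add_zero_left hS]
  refine ⟨hxy, summable_of_wit hAp0 hAp1, ?_⟩
  rw [add_def (S.add x y), wit_eq hAp0 hAp1, add_post_s hS hsum, hw1s, ← add_def]

end

end StmtAux
namespace StmtAux

open CategoryTheory SummablePairing

variable {C : Type u} [Category.{v} C] {S : SummablePairing C}

section
variable (hS : S.IsLeftSummability)
include hS

/-- key facts about the components of `θ` -/
lemma theta_facts (X : C) :
    S.Summable (S.p0 (S.D X) ≫ S.p1 X) (S.p1 (S.D X) ≫ S.p0 X) ∧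
    S.Summable (S.p0 (S.D X) ≫ S.p0 X)
      (S.add (S.p0 (S.D X) ≫ S.p1 X) (S.p1 (S.D X) ≫ S.p0 X)) := by
  have hab : S.Summable (S.p0 (S.D X) ≫ S.p0 X) (S.p0 (S.D X) ≫ S.p1 X) :=
    summable_of_wit (w := S.p0 (S.D X)) rfl rfl
  have hab_add : S.add (S.p0 (S.D X) ≫ S.p0 X) (S.p0 (S.D X) ≫ S.p1 X)
      = S.p0 (S.D X) ≫ S.s X := by
    rw [add_def, wit_eq (w := S.p0 (S.D X)) rfl rfl]
  have hcd : S.Summable (S.p1 (S.D X) ≫ S.p0 X) (S.p1 (S.D X) ≫ S.p1 X) :=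
    summable_of_wit (w := S.p1 (S.D X)) rfl rfl
  have hcd_add : S.add (S.p1 (S.D X) ≫ S.p0 X) (S.p1 (S.D X) ≫ S.p1 X)
      = S.p1 (S.D X) ≫ S.s X := by
    rw [add_def, wit_eq (w := S.p1 (S.D X)) rfl rfl]
  have hp01 : S.Summable (S.p0 (S.D X)) (S.p1 (S.D X)) :=
    summable_of_wit (w := 𝟙 _) (Category.id_comp _) (Category.id_comp _)
  have h1 : S.Summable
      (S.add (S.p0 (S.D X) ≫ S.p0 X) (S.p0 (S.D X) ≫ S.p1 X))
      (S.add (S.p1 (S.D X) ≫ S.p0 X) (S.p1 (S.D X) ≫ S.p1 X)) := by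
    rw [hab_add, hcd_add]; exact summable_post_s hS hp01
  obtain ⟨hb_cd, ha_bcd, -⟩ := assocL hS hab h1
  obtain ⟨hbc, hbc_d, hsum_eq⟩ := assocR hS hcd hb_cd
  rw [← hsum_eq] at ha_bcd
  obtain ⟨ha_bc, -, -⟩ := assocR hS hbc_d ha_bcd
  exact ⟨hbc, ha_bc⟩

lemma theta_p0 (X : C) : S.theta X ≫ S.p0 X = S.p0 (S.D X) ≫ S.p0 X := by
  rw [SummablePairing.theta]; exact wit_p0 (theta_facts hS X).2

lemma theta_p1 (X : C) :
    S.theta X ≫ S.p1 X = S.add (S.p0 (S.D X) ≫ S.p1 X) (S.p1 (S.D X) ≫ S.p0 X) := by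
  rw [SummablePairing.theta]; exact wit_p1 (theta_facts hS X).2

end

/-- the triple-summability predicate -/
def Tri (S : SummablePairing C) {U X : C} (x u v : U ⟶ X) : Prop :=
  S.Summable u v ∧ S.Summable x (S.add u v)

section
variable (hS : S.IsLeftSummability)
include hS

lemma tri_swap23 {U X : C} {x u v : U ⟶ X} (h : Tri S x u v) : Tri S x v u := by
  obtain ⟨h1, h2⟩ := h
  exact ⟨summable_comm hS h1, by rwa [add_comm' hS h1]⟩

lemma tri_swap12 {U X : C} {x u v : U ⟶ X} (h : Tri S x u v) : Tri S u x v := by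
  obtain ⟨huv, hx⟩ := h
  obtain ⟨hxu, hxuv, -⟩ := assocR hS huv hx
  have hux : S.Summable u x := summable_comm hS hxu
  have h' : S.Summable (S.add u x) v := by rwa [add_comm' hS hxu]
  obtain ⟨hxv, huxv, -⟩ := assocL hS hux h'
  exact ⟨hxv, huxv⟩

end

lemma cons1_eq {α : Type*} {a p : α} {m : Multiset α} (h : a ::ₘ m = p ::ₘ 0) :
    a = p ∧ m = 0 := by
  have hmem : a ∈ p ::ₘ (0 : Multiset α) := h ▸ Multiset.mem_cons_self a m
  simp only [Multiset.mem_cons, Multiset.notMem_zero, or_false] at hmem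
  subst hmem
  exact ⟨rfl, (Multiset.cons_inj_right a).1 h⟩

lemma cons2_eq {α : Type*} {a x u : α} {m : Multiset α} (h : a ::ₘ m = x ::ₘ u ::ₘ 0) :
    (a = x ∧ m = u ::ₘ 0) ∨ (a = u ∧ m = x ::ₘ 0) := by
  have hmem : a ∈ x ::ₘ u ::ₘ (0 : Multiset α) := h ▸ Multiset.mem_cons_self a m
  simp only [Multiset.mem_cons, Multiset.notMem_zero, or_false] at hmem
  by_cases hax : a = x
  · subst hax
    exact Or.inl ⟨rfl, (Multiset.cons_inj_right a).1 h⟩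
  · have hau : a = u := hmem.resolve_left hax
    subst hau
    refine Or.inr ⟨rfl, (Multiset.cons_inj_right a).1 ?_⟩
    rw [h, Multiset.cons_swap]

lemma cons3_eq {α : Type*} {a x u v : α} {m : Multiset α}
    (h : a ::ₘ m = x ::ₘ u ::ₘ v ::ₘ 0) :
    (a = x ∧ m = u ::ₘ v ::ₘ 0) ∨ (a = u ∧ m = x ::ₘ v ::ₘ 0) ∨
    (a = v ∧ m = x ::ₘ u ::ₘ 0) := by
  have hmem : a ∈ x ::ₘ u ::ₘ v ::ₘ (0 : Multiset α) := h ▸ Multiset.mem_cons_self a m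
  simp only [Multiset.mem_cons, Multiset.notMem_zero, or_false] at hmem
  by_cases hax : a = x
  · subst hax
    exact Or.inl ⟨rfl, (Multiset.cons_inj_right a).1 h⟩
  · by_cases hau : a = u
    · subst hau
      refine Or.inr (Or.inl ⟨rfl, (Multiset.cons_inj_right a).1 ?_⟩)
      rw [h, Multiset.cons_swap]
    · have hav : a = v := (hmem.resolve_left hax).resolve_left hau
      subst hav
      refine Or.inr (Or.inr ⟨rfl, (Multiset.cons_inj_right a).1 ?_⟩)
      rw [h, Multiset.cons_swap u a, Multiset.cons_swap x a]

lemma ms_inv0 {U X : C} {t : U ⟶ X} {m : Multiset (U ⟶ X)}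
    (h : S.MSummable m t) (hm : m = 0) : t = S.zero U X := by
  cases h with
  | nil => rfl
  | cons h1 hsf => exact absurd hm Multiset.cons_ne_zero

lemma ms_inv1 (hS : S.IsLeftSummability) {U X : C} {p t : U ⟶ X} {m : Multiset (U ⟶ X)}
    (h : S.MSummable m t) (hm : m = p ::ₘ 0) : t = p := by
  cases h with
  | nil => exact absurd hm.symm Multiset.cons_ne_zero
  | @cons m1 t1 f h1 hsf =>
    obtain ⟨rfl, hm0⟩ := cons1_eq hm
    rw [ms_inv0 h1 hm0, add_zero_left hS]

lemma ms_inv2 (hS : S.IsLeftSummability) {U X : C} {p q t : U ⟶ X} {m : Multiset (U ⟶ X)}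
    (h : S.MSummable m t) (hm : m = p ::ₘ q ::ₘ 0) :
    (S.Summable p q ∧ t = S.add p q) ∨ (S.Summable q p ∧ t = S.add q p) := by
  cases h with
  | nil => exact absurd hm.symm Multiset.cons_ne_zero
  | @cons m1 t1 f h1 hsf =>
    rcases cons2_eq hm with ⟨rfl, hm1⟩ | ⟨rfl, hm1⟩
    · have ht1 : t1 = q := ms_inv1 hS h1 hm1
      subst ht1
      exact Or.inr ⟨summable_comm hS (summable_comm hS hsf), add_comm' hS (summable_comm hS hsf) ▸ rfl⟩
    · have ht1 : t1 = p := ms_inv1 hS h1 hm1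
      subst ht1
      exact Or.inl ⟨summable_comm hS (summable_comm hS hsf), rfl⟩

lemma ms_inv3 (hS : S.IsLeftSummability) {U X : C} {x u v t : U ⟶ X}
    {m : Multiset (U ⟶ X)} (h : S.MSummable m t) (hm : m = x ::ₘ u ::ₘ v ::ₘ 0) :
    Tri S x u v := by
  cases h with
  | nil => exact absurd hm.symm Multiset.cons_ne_zero
  | @cons m1 t1 f h1 hsf =>
    have tri_of : ∀ {p q : U ⟶ X}, (S.Summable p q ∧ t1 = S.add p q) ∨
        (S.Summable q p ∧ t1 = S.add q p) → Tri S f p q := by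
      rintro p q (⟨hpq, rfl⟩ | ⟨hqp, rfl⟩)
      · exact ⟨hpq, summable_comm hS hsf⟩
      · exact tri_swap23 hS ⟨hqp, summable_comm hS hsf⟩
    rcases cons3_eq hm with ⟨rfl, hm1⟩ | ⟨rfl, hm1⟩ | ⟨rfl, hm1⟩
    · exact tri_of (ms_inv2 hS h1 hm1)
    · -- f = u, remaining {x, v} : have Tri u x v, want Tri x u v
      exact tri_swap12 hS (tri_of (ms_inv2 hS h1 hm1))
    · -- f = v, remaining {x, u} : have Tri v x u, want Tri x u v
      exact tri_swap23 hS (tri_swap12 hS (tri_of (ms_inv2 hS h1 hm1)))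

end StmtAux

open StmtAux in
/-- equivalences for the naturality of `θ` (additivity of the
derivative in its second argument). -/
theorem stmt16 {C : Type u} [Category.{v} C] (S : SummablePairing C)
    (hS : S.IsLeftSummability) (Dm : DiffOp S)
    (hproj : Dm.DprojLin) (hchain : Dm.Dchain) :
    ((∀ (X Y : C) (f : X ⟶ Y), S.theta X ≫ Dm.map f = Dm.map (Dm.map f) ≫ S.theta Y) ↔
     (∀ (X Y : C) (f : X ⟶ Y),
        S.Summable (Dm.map (S.p0 X) ≫ Dm.dd f) (S.p0 (S.D X) ≫ Dm.dd f) ∧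
        S.theta X ≫ Dm.dd f =
          S.add (Dm.map (S.p0 X) ≫ Dm.dd f) (S.p0 (S.D X) ≫ Dm.dd f))) ∧
    ((∀ (X Y : C) (f : X ⟶ Y),
        S.Summable (Dm.map (S.p0 X) ≫ Dm.dd f) (S.p0 (S.D X) ≫ Dm.dd f) ∧
        S.theta X ≫ Dm.dd f =
          S.add (Dm.map (S.p0 X) ≫ Dm.dd f) (S.p0 (S.D X) ≫ Dm.dd f)) ↔
     (∀ (X Y U : C) (f : X ⟶ Y) (x u v : U ⟶ X),
        (∃ t, S.MSummable (x ::ₘ u ::ₘ v ::ₘ (0 : Multiset (U ⟶ X))) t) →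
        S.Summable (S.wit x u ≫ Dm.dd f) (S.wit x v ≫ Dm.dd f) ∧
        S.wit x (S.add u v) ≫ Dm.dd f =
          S.add (S.wit x u ≫ Dm.dd f) (S.wit x v ≫ Dm.dd f))) := by
  -- two key identities relating the pieces of `θ ≫ ∂f` with `D²f`
  have Ea : ∀ (X Y : C) (f : X ⟶ Y),
      Dm.map (Dm.map f) ≫ (S.p0 (S.D Y) ≫ S.p1 Y) = S.p0 (S.D X) ≫ Dm.dd f := by
    intro X Y f
    rw [DiffOp.dd, ← Category.assoc, Dm.map_p0 (Dm.map f), Category.assoc]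
  have Eb : ∀ (X Y : C) (f : X ⟶ Y),
      Dm.map (Dm.map f) ≫ (S.p1 (S.D Y) ≫ S.p0 Y) = Dm.map (S.p0 X) ≫ Dm.dd f := by
    intro X Y f
    rw [DiffOp.dd, ← Category.assoc, ← Category.assoc, ← hchain.2, ← Dm.map_p0 f,
      hchain.2, Category.assoc, Category.assoc, (hproj.1 Y).1]
  -- (1) → (2)
  have h12 : (∀ (X Y : C) (f : X ⟶ Y),
      S.theta X ≫ Dm.map f = Dm.map (Dm.map f) ≫ S.theta Y) →
      (∀ (X Y : C) (f : X ⟶ Y),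
        S.Summable (Dm.map (S.p0 X) ≫ Dm.dd f) (S.p0 (S.D X) ≫ Dm.dd f) ∧
        S.theta X ≫ Dm.dd f =
          S.add (Dm.map (S.p0 X) ≫ Dm.dd f) (S.p0 (S.D X) ≫ Dm.dd f)) := by
    intro h1 X Y f
    have hbc := (theta_facts hS Y).1
    have hsum := summable_precomp (Dm.map (Dm.map f)) hbc
    rw [Ea, Eb] at hsum
    refine ⟨summable_comm hS hsum, ?_⟩
    calc S.theta X ≫ Dm.dd f
        = Dm.map (Dm.map f) ≫ (S.theta Y ≫ S.p1 Y) := by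
          rw [DiffOp.dd, ← Category.assoc, h1 X Y f, Category.assoc]
      _ = Dm.map (Dm.map f) ≫
            S.add (S.p0 (S.D Y) ≫ S.p1 Y) (S.p1 (S.D Y) ≫ S.p0 Y) := by
          rw [theta_p1 hS Y]
      _ = S.add (Dm.map (Dm.map f) ≫ (S.p0 (S.D Y) ≫ S.p1 Y))
            (Dm.map (Dm.map f) ≫ (S.p1 (S.D Y) ≫ S.p0 Y)) := (add_precomp _ hbc).symm
      _ = S.add (S.p0 (S.D X) ≫ Dm.dd f) (Dm.map (S.p0 X) ≫ Dm.dd f) := by rw [Ea, Eb]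
      _ = S.add (Dm.map (S.p0 X) ≫ Dm.dd f) (S.p0 (S.D X) ≫ Dm.dd f) :=
          (add_comm' hS hsum).symm
  -- (2) → (1)
  have h21 : (∀ (X Y : C) (f : X ⟶ Y),
      S.Summable (Dm.map (S.p0 X) ≫ Dm.dd f) (S.p0 (S.D X) ≫ Dm.dd f) ∧
      S.theta X ≫ Dm.dd f =
        S.add (Dm.map (S.p0 X) ≫ Dm.dd f) (S.p0 (S.D X) ≫ Dm.dd f)) →
      (∀ (X Y : C) (f : X ⟶ Y),
        S.theta X ≫ Dm.map f = Dm.map (Dm.map f) ≫ S.theta Y) := by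
    intro h2 X Y f
    apply S.jointly_monic
    · calc (S.theta X ≫ Dm.map f) ≫ S.p0 Y
          = S.theta X ≫ S.p0 X ≫ f := by rw [Category.assoc, Dm.map_p0]
        _ = (S.p0 (S.D X) ≫ S.p0 X) ≫ f := by rw [← Category.assoc, theta_p0 hS X]
        _ = S.p0 (S.D X) ≫ Dm.map f ≫ S.p0 Y := by
            rw [Dm.map_p0 f, ← Category.assoc]
        _ = (Dm.map (Dm.map f) ≫ S.p0 (S.D Y)) ≫ S.p0 Y := by
            rw [Dm.map_p0 (Dm.map f), Category.assoc]
        _ = (Dm.map (Dm.map f) ≫ S.theta Y) ≫ S.p0 Y := by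
            rw [Category.assoc, Category.assoc, theta_p0 hS Y]
    · calc (S.theta X ≫ Dm.map f) ≫ S.p1 Y
          = S.theta X ≫ Dm.dd f := by rw [Category.assoc]; rfl
        _ = S.add (Dm.map (S.p0 X) ≫ Dm.dd f) (S.p0 (S.D X) ≫ Dm.dd f) := (h2 X Y f).2
        _ = S.add (S.p0 (S.D X) ≫ Dm.dd f) (Dm.map (S.p0 X) ≫ Dm.dd f) :=
            (add_comm' hS (h2 X Y f).1).symm
        _ = S.add (Dm.map (Dm.map f) ≫ (S.p0 (S.D Y) ≫ S.p1 Y))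
              (Dm.map (Dm.map f) ≫ (S.p1 (S.D Y) ≫ S.p0 Y)) := by rw [Ea, Eb]
        _ = Dm.map (Dm.map f) ≫
              S.add (S.p0 (S.D Y) ≫ S.p1 Y) (S.p1 (S.D Y) ≫ S.p0 Y) :=
            add_precomp _ (theta_facts hS Y).1
        _ = Dm.map (Dm.map f) ≫ (S.theta Y ≫ S.p1 Y) := by rw [theta_p1 hS Y]
        _ = (Dm.map (Dm.map f) ≫ S.theta Y) ≫ S.p1 Y := by rw [Category.assoc]
  -- (2) → (3)
  have h23 : (∀ (X Y : C) (f : X ⟶ Y),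
      S.Summable (Dm.map (S.p0 X) ≫ Dm.dd f) (S.p0 (S.D X) ≫ Dm.dd f) ∧
      S.theta X ≫ Dm.dd f =
        S.add (Dm.map (S.p0 X) ≫ Dm.dd f) (S.p0 (S.D X) ≫ Dm.dd f)) →
      (∀ (X Y U : C) (f : X ⟶ Y) (x u v : U ⟶ X),
        (∃ t, S.MSummable (x ::ₘ u ::ₘ v ::ₘ (0 : Multiset (U ⟶ X))) t) →
        S.Summable (S.wit x u ≫ Dm.dd f) (S.wit x v ≫ Dm.dd f) ∧
        S.wit x (S.add u v) ≫ Dm.dd f =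
          S.add (S.wit x u ≫ Dm.dd f) (S.wit x v ≫ Dm.dd f)) := by
    intro h2 X Y U f x u v hex
    obtain ⟨t, ht⟩ := hex
    obtain ⟨huv, hxuv⟩ : StmtAux.Tri S x u v := ms_inv3 hS ht rfl
    obtain ⟨hxu, hxu_v, -⟩ := assocR hS huv hxuv
    have e2 : (v ≫ S.iota0 X) ≫ S.s X = v := by
      rw [Category.assoc, iota0_s hS, Category.comp_id]
    have hwits : S.Summable (S.wit x u) (v ≫ S.iota0 X) :=
      hS.2.2.2 _ _ _ _ (by rw [e2, ← add_def]; exact hxu_v)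
    -- `W ≫ θ` is the witness of `(x, u + v)`
    have hWt : S.wit x (S.add u v) = S.wit (S.wit x u) (v ≫ S.iota0 X) ≫ S.theta X := by
      refine wit_eq ?_ ?_
      · rw [Category.assoc, theta_p0 hS X, ← Category.assoc, wit_p0 hwits, wit_p0 hxu]
      · rw [Category.assoc, theta_p1 hS X,
          ← add_precomp _ (theta_facts hS X).1, ← Category.assoc, wit_p0 hwits,
          ← Category.assoc, wit_p1 hwits, wit_p1 hxu, Category.assoc, iota0_p0 hS,
          Category.comp_id]
    -- `W ≫ D p0` is the witness of `(x, v)`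
    have hWD : S.wit x v = S.wit (S.wit x u) (v ≫ S.iota0 X) ≫ Dm.map (S.p0 X) := by
      refine wit_eq ?_ ?_
      · rw [Category.assoc, Dm.map_p0, ← Category.assoc, wit_p0 hwits, wit_p0 hxu]
      · rw [Category.assoc, (hproj.1 X).1, ← Category.assoc, wit_p1 hwits,
          Category.assoc, iota0_p0 hS, Category.comp_id]
    have hsum := summable_precomp (S.wit (S.wit x u) (v ≫ S.iota0 X)) (h2 X Y f).1
    rw [← Category.assoc, ← Category.assoc, ← hWD, wit_p0 hwits] at hsum
    -- hsum : Summable (wit x v ≫ dd f) (wit x u ≫ dd f)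
    refine ⟨summable_comm hS hsum, ?_⟩
    calc S.wit x (S.add u v) ≫ Dm.dd f
        = S.wit (S.wit x u) (v ≫ S.iota0 X) ≫ (S.theta X ≫ Dm.dd f) := by
          rw [hWt, Category.assoc]
      _ = S.wit (S.wit x u) (v ≫ S.iota0 X) ≫
            S.add (Dm.map (S.p0 X) ≫ Dm.dd f) (S.p0 (S.D X) ≫ Dm.dd f) := by
          rw [(h2 X Y f).2]
      _ = S.add (S.wit (S.wit x u) (v ≫ S.iota0 X) ≫ (Dm.map (S.p0 X) ≫ Dm.dd f))
            (S.wit (S.wit x u) (v ≫ S.iota0 X) ≫ (S.p0 (S.D X) ≫ Dm.dd f)) :=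
          (add_precomp _ (h2 X Y f).1).symm
      _ = S.add (S.wit x v ≫ Dm.dd f) (S.wit x u ≫ Dm.dd f) := by
          rw [← Category.assoc, ← Category.assoc, ← hWD, wit_p0 hwits]
      _ = S.add (S.wit x u ≫ Dm.dd f) (S.wit x v ≫ Dm.dd f) :=
          (add_comm' hS hsum).symm
  -- (3) → (2)
  have h32 : (∀ (X Y U : C) (f : X ⟶ Y) (x u v : U ⟶ X),
      (∃ t, S.MSummable (x ::ₘ u ::ₘ v ::ₘ (0 : Multiset (U ⟶ X))) t) →
      S.Summable (S.wit x u ≫ Dm.dd f) (S.wit x v ≫ Dm.dd f) ∧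
      S.wit x (S.add u v) ≫ Dm.dd f =
        S.add (S.wit x u ≫ Dm.dd f) (S.wit x v ≫ Dm.dd f)) →
      (∀ (X Y : C) (f : X ⟶ Y),
        S.Summable (Dm.map (S.p0 X) ≫ Dm.dd f) (S.p0 (S.D X) ≫ Dm.dd f) ∧
        S.theta X ≫ Dm.dd f =
          S.add (Dm.map (S.p0 X) ≫ Dm.dd f) (S.p0 (S.D X) ≫ Dm.dd f)) := by
    intro h3 X Y f
    have hbc := (theta_facts hS X).1
    have habc := (theta_facts hS X).2
    -- build the summable family
    have m1 : S.MSummable ((S.p1 (S.D X) ≫ S.p0 X) ::ₘ (0 : Multiset _))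
        (S.p1 (S.D X) ≫ S.p0 X) := by
      have := SummablePairing.MSummable.cons (S := S) SummablePairing.MSummable.nil
        (summable_zero_left hS (S.p1 (S.D X) ≫ S.p0 X))
      rwa [add_zero_left hS] at this
    have m2 : S.MSummable ((S.p0 (S.D X) ≫ S.p1 X) ::ₘ (S.p1 (S.D X) ≫ S.p0 X) ::ₘ 0)
        (S.add (S.p0 (S.D X) ≫ S.p1 X) (S.p1 (S.D X) ≫ S.p0 X)) := by
      have := SummablePairing.MSummable.cons (S := S) m1 (summable_comm hS hbc)
      rwa [add_comm' hS hbc] at this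
    have m3 := SummablePairing.MSummable.cons (S := S) m2 (summable_comm hS habc)
    obtain ⟨hsum', heq'⟩ := h3 X Y (S.D (S.D X)) f (S.p0 (S.D X) ≫ S.p0 X)
      (S.p0 (S.D X) ≫ S.p1 X) (S.p1 (S.D X) ≫ S.p0 X) ⟨_, m3⟩
    have hw1 : S.wit (S.p0 (S.D X) ≫ S.p0 X) (S.p0 (S.D X) ≫ S.p1 X) = S.p0 (S.D X) :=
      wit_eq rfl rfl
    have hw2 : S.wit (S.p0 (S.D X) ≫ S.p0 X) (S.p1 (S.D X) ≫ S.p0 X) = Dm.map (S.p0 X) :=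
      wit_eq (Dm.map_p0 (S.p0 X)) ((hproj.1 X).1)
    have hwt : S.wit (S.p0 (S.D X) ≫ S.p0 X)
        (S.add (S.p0 (S.D X) ≫ S.p1 X) (S.p1 (S.D X) ≫ S.p0 X)) = S.theta X := by
      rw [SummablePairing.theta]
    rw [hw1, hw2] at hsum'
    rw [hw1, hw2, hwt] at heq'
    exact ⟨summable_comm hS hsum', heq'.trans (add_comm' hS hsum').symm⟩
  exact ⟨⟨h12, h21⟩, ⟨h23, h32⟩⟩
end

section
/- In a category C equipped with a pre-differential structure satisfying (Dproj-lin) and (D-chain), the following are equivalent: (1) c is natural with respect to D, i.e. D²f ∘ c = c ∘ D²f for all f; (2) for any f ∈ C(X, Y), ∂(∂f) ∘ c = ∂(∂f); (3) for any f ∈ C(X, Y) and any x, u, v, w ∈ C(U, X) such that the family (x, u, v, w) is summable (so that the witnesses ⟨⟨x, u⟩, ⟨v, w⟩⟩ and ⟨⟨x, v⟩, ⟨u, w⟩⟩ exist), ∂(∂f) ∘ ⟨⟨x, u⟩, ⟨v, w⟩⟩ = ∂(∂f) ∘ ⟨⟨x, v⟩, ⟨u, w⟩⟩. -/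
open CategoryTheory CategoryTheory.Limits
open scoped Classical

universe v u

section Aux

variable {C : Type u} [Category.{v} C] {S : SummablePairing C}

theorem wit_p0' {X Y : C} {f0 f1 : X ⟶ Y} (h : S.Summable f0 f1) :
    S.wit f0 f1 ≫ S.p0 Y = f0 := by
  unfold SummablePairing.wit
  rw [dif_pos h]
  exact h.choose_spec.1

theorem wit_p1' {X Y : C} {f0 f1 : X ⟶ Y} (h : S.Summable f0 f1) :
    S.wit f0 f1 ≫ S.p1 Y = f1 := by
  unfold SummablePairing.wit
  rw [dif_pos h]
  exact h.choose_spec.2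

theorem wit_unique' {X Y : C} {f0 f1 : X ⟶ Y} {w : X ⟶ S.D Y}
    (h0 : w ≫ S.p0 Y = f0) (h1 : w ≫ S.p1 Y = f1) : S.wit f0 f1 = w := by
  have hs : S.Summable f0 f1 := ⟨w, h0, h1⟩
  exact S.jointly_monic (by rw [wit_p0' hs, h0]) (by rw [wit_p1' hs, h1])

theorem add_eq' {X Y : C} {f0 f1 : X ⟶ Y} {w : X ⟶ S.D Y}
    (h0 : w ≫ S.p0 Y = f0) (h1 : w ≫ S.p1 Y = f1) :
    S.add f0 f1 = w ≫ S.s Y := by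
  unfold SummablePairing.add
  rw [wit_unique' h0 h1]

theorem sum_zero_right (hS : S.IsLeftSummability) {X Y : C} (f : X ⟶ Y) :
    S.Summable f (S.zero X Y) ∧ S.add f (S.zero X Y) = f := by
  obtain ⟨hid, -, hsum, -⟩ := hS.2.2.1 Y
  have h0 : (f ≫ S.wit (𝟙 Y) (S.zero Y Y)) ≫ S.p0 Y = f := by
    rw [Category.assoc, wit_p0' hid, Category.comp_id]
  have h1 : (f ≫ S.wit (𝟙 Y) (S.zero Y Y)) ≫ S.p1 Y = S.zero X Y := by
    rw [Category.assoc, wit_p1' hid, S.comp_zero]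
  refine ⟨⟨_, h0, h1⟩, ?_⟩
  rw [add_eq' h0 h1, Category.assoc]
  have hs' : S.wit (𝟙 Y) (S.zero Y Y) ≫ S.s Y = 𝟙 Y := hsum
  rw [hs', Category.comp_id]

theorem sum_zero_left (hS : S.IsLeftSummability) {X Y : C} (f : X ⟶ Y) :
    S.Summable (S.zero X Y) f ∧ S.add (S.zero X Y) f = f := by
  obtain ⟨-, hid, -, hsum⟩ := hS.2.2.1 Y
  have h0 : (f ≫ S.wit (S.zero Y Y) (𝟙 Y)) ≫ S.p0 Y = S.zero X Y := by
    rw [Category.assoc, wit_p0' hid, S.comp_zero]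
  have h1 : (f ≫ S.wit (S.zero Y Y) (𝟙 Y)) ≫ S.p1 Y = f := by
    rw [Category.assoc, wit_p1' hid, Category.comp_id]
  refine ⟨⟨_, h0, h1⟩, ?_⟩
  rw [add_eq' h0 h1, Category.assoc]
  have hs' : S.wit (S.zero Y Y) (𝟙 Y) ≫ S.s Y = 𝟙 Y := hsum
  rw [hs', Category.comp_id]

theorem summable_comm' (hS : S.IsLeftSummability) {X Y : C} {f0 f1 : X ⟶ Y}
    (h : S.Summable f0 f1) : S.Summable f1 f0 ∧ S.add f1 f0 = S.add f0 f1 := by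
  obtain ⟨hc, hcs⟩ := hS.2.1 Y
  have hcs' : S.wit (S.p1 Y) (S.p0 Y) ≫ S.s Y = S.s Y := hcs
  have h0 : (S.wit f0 f1 ≫ S.wit (S.p1 Y) (S.p0 Y)) ≫ S.p0 Y = f1 := by
    rw [Category.assoc, wit_p0' hc, wit_p1' h]
  have h1 : (S.wit f0 f1 ≫ S.wit (S.p1 Y) (S.p0 Y)) ≫ S.p1 Y = f0 := by
    rw [Category.assoc, wit_p1' hc, wit_p0' h]
  refine ⟨⟨_, h0, h1⟩, ?_⟩
  rw [add_eq' h0 h1, Category.assoc, hcs']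
  rfl

/-- L4': from `b ⊞ c` and `a ⊞ (b+c)` deduce `a ⊞ b`, `(a+b) ⊞ c` and associativity. -/
theorem assocL (hS : S.IsLeftSummability) {X Y : C} {a b c : X ⟶ Y}
    (hbc : S.Summable b c) (ha_bc : S.Summable a (S.add b c)) :
    S.Summable a b ∧ S.Summable (S.add a b) c ∧
      S.add (S.add a b) c = S.add a (S.add b c) := by
  obtain ⟨ha0, ha0s⟩ := sum_zero_right hS a
  obtain ⟨h0c, h0cs⟩ := sum_zero_left hS c
  set w1 := S.wit a (S.zero X Y) with hw1def
  set w2 := S.wit b c with hw2def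
  have e1 : w1 ≫ S.s Y = a := ha0s
  have e2 : w2 ≫ S.s Y = S.add b c := rfl
  have hw : S.Summable w1 w2 := by
    apply hS.2.2.2
    rw [e1, e2]
    exact ha_bc
  obtain ⟨hp0ab, hp0sum⟩ := (hS.1.1 Y).2 X w1 w2 hw
  obtain ⟨-, hp1sum⟩ := (hS.1.2.1 Y).2 X w1 w2 hw
  obtain ⟨-, hssum⟩ := (hS.1.2.2 Y).2 X w1 w2 hw
  have ew10 : w1 ≫ S.p0 Y = a := wit_p0' ha0
  have ew11 : w1 ≫ S.p1 Y = S.zero X Y := wit_p1' ha0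
  have ew20 : w2 ≫ S.p0 Y = b := wit_p0' hbc
  have ew21 : w2 ≫ S.p1 Y = c := wit_p1' hbc
  rw [ew10, ew20] at hp0ab hp0sum
  rw [ew11, ew21, h0cs] at hp1sum
  rw [e1, e2] at hssum
  refine ⟨hp0ab, ⟨_, hp0sum, hp1sum⟩, ?_⟩
  rw [add_eq' hp0sum hp1sum, hssum]

/-- L4: from `a ⊞ b` and `(a+b) ⊞ c` deduce `b ⊞ c`, `a ⊞ (b+c)` and associativity. -/
theorem assocR (hS : S.IsLeftSummability) {X Y : C} {a b c : X ⟶ Y}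
    (hab : S.Summable a b) (hab_c : S.Summable (S.add a b) c) :
    S.Summable b c ∧ S.Summable a (S.add b c) ∧
      S.add a (S.add b c) = S.add (S.add a b) c := by
  obtain ⟨ha0, ha0s⟩ := sum_zero_right hS a
  obtain ⟨h0c, h0cs⟩ := sum_zero_left hS c
  set w1 := S.wit a b with hw1def
  set w2 := S.wit (S.zero X Y) c with hw2def
  have e1 : w1 ≫ S.s Y = S.add a b := rfl
  have e2 : w2 ≫ S.s Y = c := h0cs
  have hw : S.Summable w1 w2 := by
    apply hS.2.2.2
    rw [e1, e2]
    exact hab_c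
  obtain ⟨-, hp0sum⟩ := (hS.1.1 Y).2 X w1 w2 hw
  obtain ⟨hp1bc, hp1sum⟩ := (hS.1.2.1 Y).2 X w1 w2 hw
  obtain ⟨-, hssum⟩ := (hS.1.2.2 Y).2 X w1 w2 hw
  have ew10 : w1 ≫ S.p0 Y = a := wit_p0' hab
  have ew11 : w1 ≫ S.p1 Y = b := wit_p1' hab
  have ew20 : w2 ≫ S.p0 Y = S.zero X Y := wit_p0' h0c
  have ew21 : w2 ≫ S.p1 Y = c := wit_p1' h0c
  rw [ew11, ew21] at hp1bc hp1sum
  rw [ew10, ew20, ha0s] at hp0sum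
  rw [e1, e2] at hssum
  refine ⟨hp1bc, ⟨_, hp0sum, hp1sum⟩, ?_⟩
  rw [add_eq' hp0sum hp1sum, hssum]

theorem linear_to_pair (hS : S.IsLeftSummability) {X Y : C} {x u v w : X ⟶ Y}
    (h2 : S.Summable w v) (h3 : S.Summable (S.add w v) u)
    (h4 : S.Summable (S.add (S.add w v) u) x) :
    S.Summable x u ∧ S.Summable v w ∧ S.Summable (S.add x u) (S.add v w) := by
  obtain ⟨hvw, evw⟩ := summable_comm' hS h2
  obtain ⟨hu_wv, euwv⟩ := summable_comm' hS h3
  obtain ⟨hx, -⟩ := summable_comm' hS h4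
  rw [← euwv] at hx
  obtain ⟨hxu, hxu_wv, -⟩ := assocL hS hu_wv hx
  rw [← evw] at hxu_wv
  exact ⟨hxu, hvw, hxu_wv⟩

theorem pair_to_msummable (hS : S.IsLeftSummability) {X Y : C} {x u v w : X ⟶ Y}
    (hxu : S.Summable x u) (hvw : S.Summable v w)
    (hs : S.Summable (S.add x u) (S.add v w)) :
    ∃ t, S.MSummable (x ::ₘ u ::ₘ v ::ₘ w ::ₘ (0 : Multiset (X ⟶ Y))) t := by
  obtain ⟨h0w, e0w⟩ := sum_zero_left hS w
  obtain ⟨hwv, ewv⟩ := summable_comm' hS hvw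
  obtain ⟨hux, eux⟩ := summable_comm' hS hxu
  obtain ⟨hvw_xu, -⟩ := summable_comm' hS hs
  rw [← eux] at hvw_xu
  obtain ⟨hvwu, hvwux, -⟩ := assocL hS hux hvw_xu
  have m1 : S.MSummable (w ::ₘ 0) (S.add (S.zero X Y) w) := .cons .nil h0w
  have m2 : S.MSummable (v ::ₘ w ::ₘ 0) (S.add (S.add (S.zero X Y) w) v) :=
    .cons m1 (by rw [e0w]; exact hwv)
  have e3 : S.add (S.add (S.zero X Y) w) v = S.add v w := by rw [e0w]; exact ewv
  have m3 : S.MSummable (u ::ₘ v ::ₘ w ::ₘ 0)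
      (S.add (S.add (S.add (S.zero X Y) w) v) u) :=
    .cons m2 (by rw [e3]; exact hvwu)
  have e4 : S.add (S.add (S.add (S.zero X Y) w) v) u = S.add (S.add v w) u := by
    rw [e3]
  exact ⟨_, .cons m3 (by rw [e4]; exact hvwux)⟩

theorem msummable_zero {X Y : C} {t : X ⟶ Y}
    (h : S.MSummable (0 : Multiset (X ⟶ Y)) t) : t = S.zero X Y := by
  generalize hm : (0 : Multiset (X ⟶ Y)) = m at h
  cases h with
  | nil => rfl
  | cons _ _ => simp at hm

theorem msummable_extract (hS : S.IsLeftSummability) {X Y : C}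
    {m : Multiset (X ⟶ Y)} {t : X ⟶ Y} (h : S.MSummable m t) :
    ∀ a ∈ m, ∃ t', S.MSummable (m.erase a) t' ∧ S.Summable t' a ∧ S.add t' a = t := by
  induction h with
  | nil => intro a ha; exact absurd ha (Multiset.notMem_zero a)
  | @cons m t f hm hs ih =>
    intro a ha
    by_cases haf : a = f
    · subst haf
      exact ⟨t, by rwa [Multiset.erase_cons_head], hs, rfl⟩
    · have ham : a ∈ m := (Multiset.mem_cons.mp ha).resolve_left haf
      obtain ⟨t'', h1, h2, h3⟩ := ih a ham
      rw [← h3] at hs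
      obtain ⟨haf', ht''af, e⟩ := assocR hS h2 hs
      obtain ⟨hfa, efa⟩ := summable_comm' hS haf'
      rw [← efa] at ht''af
      obtain ⟨ht''f, hsum2, e2⟩ := assocL hS hfa ht''af
      refine ⟨S.add t'' f, ?_, hsum2, ?_⟩
      · rw [Multiset.erase_cons_tail _ (Ne.symm haf)]
        exact .cons h1 ht''f
      · rw [e2, efa, e, h3]

variable {Dm : DiffOp S}

theorem summable_mapp (hS : S.IsLeftSummability) (hproj : Dm.DprojLin) (X : C) :
    S.Summable (Dm.map (S.p0 X)) (Dm.map (S.p1 X)) := by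
  apply hS.2.2.2
  rw [(hproj.1 X).2.1, (hproj.2 X).2.1]
  exact ⟨S.s (S.D X), rfl, rfl⟩

theorem cmor_eq (hS : S.IsLeftSummability) (hproj : Dm.DprojLin) (X : C) :
    S.cmor X = S.wit (Dm.map (S.p0 X)) (Dm.map (S.p1 X)) := by
  unfold SummablePairing.cmor
  rw [wit_unique' (Dm.map_p0 (S.p0 X)) (hproj.1 X).1,
      wit_unique' (Dm.map_p0 (S.p1 X)) (hproj.2 X).1]

theorem cmor_p0 (hS : S.IsLeftSummability) (hproj : Dm.DprojLin) (X : C) :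
    S.cmor X ≫ S.p0 (S.D X) = Dm.map (S.p0 X) := by
  rw [cmor_eq hS hproj X]
  exact wit_p0' (summable_mapp hS hproj X)

theorem cmor_p1 (hS : S.IsLeftSummability) (hproj : Dm.DprojLin) (X : C) :
    S.cmor X ≫ S.p1 (S.D X) = Dm.map (S.p1 X) := by
  rw [cmor_eq hS hproj X]
  exact wit_p1' (summable_mapp hS hproj X)

theorem c_p0_p0 (hS : S.IsLeftSummability) (hproj : Dm.DprojLin) (X : C) :
    S.cmor X ≫ S.p0 (S.D X) ≫ S.p0 X = S.p0 (S.D X) ≫ S.p0 X := by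
  rw [← Category.assoc, cmor_p0 hS hproj, Dm.map_p0]

theorem c_p0_p1 (hS : S.IsLeftSummability) (hproj : Dm.DprojLin) (X : C) :
    S.cmor X ≫ S.p0 (S.D X) ≫ S.p1 X = S.p1 (S.D X) ≫ S.p0 X := by
  rw [← Category.assoc, cmor_p0 hS hproj]
  exact (hproj.1 X).1

theorem c_p1_p0 (hS : S.IsLeftSummability) (hproj : Dm.DprojLin) (X : C) :
    S.cmor X ≫ S.p1 (S.D X) ≫ S.p0 X = S.p0 (S.D X) ≫ S.p1 X := by
  rw [← Category.assoc, cmor_p1 hS hproj, Dm.map_p0]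

theorem c_p1_p1 (hS : S.IsLeftSummability) (hproj : Dm.DprojLin) (X : C) :
    S.cmor X ≫ S.p1 (S.D X) ≫ S.p1 X = S.p1 (S.D X) ≫ S.p1 X := by
  rw [← Category.assoc, cmor_p1 hS hproj]
  exact (hproj.2 X).1

theorem jm2 {U X : C} {f g : U ⟶ S.D (S.D X)}
    (h00 : f ≫ S.p0 (S.D X) ≫ S.p0 X = g ≫ S.p0 (S.D X) ≫ S.p0 X)
    (h01 : f ≫ S.p0 (S.D X) ≫ S.p1 X = g ≫ S.p0 (S.D X) ≫ S.p1 X)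
    (h10 : f ≫ S.p1 (S.D X) ≫ S.p0 X = g ≫ S.p1 (S.D X) ≫ S.p0 X)
    (h11 : f ≫ S.p1 (S.D X) ≫ S.p1 X = g ≫ S.p1 (S.D X) ≫ S.p1 X) : f = g := by
  apply S.jointly_monic
  · apply S.jointly_monic
    · simpa only [Category.assoc] using h00
    · simpa only [Category.assoc] using h01
  · apply S.jointly_monic
    · simpa only [Category.assoc] using h10
    · simpa only [Category.assoc] using h11

theorem cc_id (hS : S.IsLeftSummability) (hproj : Dm.DprojLin) (X : C) :
    S.cmor X ≫ S.cmor X = 𝟙 (S.D (S.D X)) := by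
  apply jm2 <;>
    simp only [Category.assoc, c_p0_p0 hS hproj, c_p0_p1 hS hproj,
      c_p1_p0 hS hproj, c_p1_p1 hS hproj, Category.id_comp]

theorem c_mapp0 (hS : S.IsLeftSummability) (hproj : Dm.DprojLin) (X : C) :
    S.cmor X ≫ Dm.map (S.p0 X) = S.p0 (S.D X) := by
  rw [← cmor_p0 hS hproj, ← Category.assoc, cc_id hS hproj, Category.id_comp]

theorem c_mapp1 (hS : S.IsLeftSummability) (hproj : Dm.DprojLin) (X : C) :
    S.cmor X ≫ Dm.map (S.p1 X) = S.p1 (S.D X) := by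
  rw [← cmor_p1 hS hproj, ← Category.assoc, cc_id hS hproj, Category.id_comp]

theorem dd_dd (hproj : Dm.DprojLin) (hchain : Dm.Dchain) {X Y : C} (f : X ⟶ Y) :
    Dm.dd (Dm.dd f) = Dm.map (Dm.map f) ≫ S.p1 (S.D Y) ≫ S.p1 Y := by
  unfold DiffOp.dd
  rw [hchain.2, Category.assoc, (hproj.2 Y).1]

end Aux

/-- equivalences for the naturality of `c` (Schwarz rule). -/
theorem stmt17 {C : Type u} [Category.{v} C] (S : SummablePairing C)
    (hS : S.IsLeftSummability) (Dm : DiffOp S)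
    (hproj : Dm.DprojLin) (hchain : Dm.Dchain) :
    ((∀ (X Y : C) (f : X ⟶ Y),
        S.cmor X ≫ Dm.map (Dm.map f) = Dm.map (Dm.map f) ≫ S.cmor Y) ↔
     (∀ (X Y : C) (f : X ⟶ Y), S.cmor X ≫ Dm.dd (Dm.dd f) = Dm.dd (Dm.dd f))) ∧
    ((∀ (X Y : C) (f : X ⟶ Y), S.cmor X ≫ Dm.dd (Dm.dd f) = Dm.dd (Dm.dd f)) ↔
     (∀ (X Y U : C) (f : X ⟶ Y) (x u v w : U ⟶ X),
        (∃ t, S.MSummable (x ::ₘ u ::ₘ v ::ₘ w ::ₘ (0 : Multiset (U ⟶ X))) t) →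
        S.wit (S.wit x u) (S.wit v w) ≫ Dm.dd (Dm.dd f) =
          S.wit (S.wit x v) (S.wit u w) ≫ Dm.dd (Dm.dd f))) := by
  constructor
  · constructor
    · intro h1 X Y f
      rw [dd_dd hproj hchain f, ← Category.assoc, h1 X Y f, Category.assoc,
        c_p1_p1 hS hproj]
    · intro h2 X Y f
      have m1 : Dm.map (Dm.map f) ≫ S.p0 (S.D Y) ≫ S.p0 Y
          = S.p0 (S.D X) ≫ S.p0 X ≫ f := by
        rw [← Category.assoc, Dm.map_p0, Category.assoc, Dm.map_p0]
      have m2 : Dm.map (Dm.map f) ≫ S.p0 (S.D Y) ≫ S.p1 Y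
          = S.p0 (S.D X) ≫ Dm.map f ≫ S.p1 Y := by
        rw [← Category.assoc, Dm.map_p0, Category.assoc]
      have m3 : Dm.map (Dm.map f) ≫ S.p1 (S.D Y) ≫ S.p0 Y
          = S.cmor X ≫ S.p0 (S.D X) ≫ Dm.map f ≫ S.p1 Y := by
        rw [← (hproj.1 Y).1, ← Category.assoc, ← hchain.2, Dm.map_p0, hchain.2,
          ← cmor_p0 hS hproj]
        simp only [Category.assoc]
      have m4 : Dm.map (Dm.map f) ≫ S.p1 (S.D Y) ≫ S.p1 Y = Dm.dd (Dm.dd f) :=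
        (dd_dd hproj hchain f).symm
      apply jm2 <;>
        simp only [Category.assoc, m1, m2, m3, m4,
          c_p0_p0 hS hproj Y, c_p0_p1 hS hproj Y, c_p1_p0 hS hproj Y,
          c_p1_p1 hS hproj Y,
          reassoc_of% (c_p0_p0 hS hproj X), reassoc_of% (c_p0_p1 hS hproj X),
          reassoc_of% (c_p1_p0 hS hproj X), reassoc_of% (c_p1_p1 hS hproj X),
          reassoc_of% (cmor_p0 hS hproj X), reassoc_of% (cmor_p1 hS hproj X),
          reassoc_of% (c_mapp0 hS hproj X), reassoc_of% (c_mapp1 hS hproj X),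
          h2 X Y f]
  · constructor
    · intro h2 X Y U f x u v w hex
      obtain ⟨t, hms⟩ := hex
      obtain ⟨t3, hm3, hx, -⟩ := msummable_extract hS hms x (by simp)
      rw [Multiset.erase_cons_head] at hm3
      obtain ⟨t2, hm2, hu, e3⟩ := msummable_extract hS hm3 u (by simp)
      rw [Multiset.erase_cons_head] at hm2
      obtain ⟨t1, hm1, hv, e2⟩ := msummable_extract hS hm2 v (by simp)
      rw [Multiset.erase_cons_head] at hm1
      obtain ⟨t0, hm0, hw, e1⟩ := msummable_extract hS hm1 w (by simp)
      rw [Multiset.erase_cons_head] at hm0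
      have ht0 : t0 = S.zero U X := msummable_zero hm0
      subst ht0
      obtain ⟨-, e0w⟩ := sum_zero_left hS w
      rw [e0w] at e1
      subst e1; subst e2; subst e3
      obtain ⟨hxu, hvw, hsum⟩ := linear_to_pair hS hv hu hx
      have hpair : S.Summable (S.wit x u) (S.wit v w) := by
        apply hS.2.2.2
        exact hsum
      have hW0 : S.wit (S.wit x u) (S.wit v w) ≫ S.p0 (S.D X) = S.wit x u :=
        wit_p0' hpair
      have hW1 : S.wit (S.wit x u) (S.wit v w) ≫ S.p1 (S.D X) = S.wit v w :=
        wit_p1' hpair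
      have e_xv0 : ((S.wit (S.wit x u) (S.wit v w) ≫ S.cmor X) ≫ S.p0 (S.D X))
          ≫ S.p0 X = x := by
        simp only [Category.assoc, c_p0_p0 hS hproj X, reassoc_of% hW0,
          wit_p0' hxu]
      have e_xv1 : ((S.wit (S.wit x u) (S.wit v w) ≫ S.cmor X) ≫ S.p0 (S.D X))
          ≫ S.p1 X = v := by
        simp only [Category.assoc, c_p0_p1 hS hproj X, reassoc_of% hW1,
          wit_p0' hvw]
      have e_uw0 : ((S.wit (S.wit x u) (S.wit v w) ≫ S.cmor X) ≫ S.p1 (S.D X))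
          ≫ S.p0 X = u := by
        simp only [Category.assoc, c_p1_p0 hS hproj X, reassoc_of% hW0,
          wit_p1' hxu]
      have e_uw1 : ((S.wit (S.wit x u) (S.wit v w) ≫ S.cmor X) ≫ S.p1 (S.D X))
          ≫ S.p1 X = w := by
        simp only [Category.assoc, c_p1_p1 hS hproj X, reassoc_of% hW1,
          wit_p1' hvw]
      have hwitxv : S.wit x v
          = (S.wit (S.wit x u) (S.wit v w) ≫ S.cmor X) ≫ S.p0 (S.D X) :=
        wit_unique' e_xv0 e_xv1
      have hwituw : S.wit u w
          = (S.wit (S.wit x u) (S.wit v w) ≫ S.cmor X) ≫ S.p1 (S.D X) :=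
        wit_unique' e_uw0 e_uw1
      have hfin : S.wit (S.wit x v) (S.wit u w)
          = S.wit (S.wit x u) (S.wit v w) ≫ S.cmor X :=
        wit_unique' hwitxv.symm hwituw.symm
      rw [hfin, Category.assoc, h2 X Y f]
    · intro h3 X Y f
      have e0 : S.wit (S.p0 (S.D X) ≫ S.p0 X) (S.p0 (S.D X) ≫ S.p1 X)
          = S.p0 (S.D X) := wit_unique' rfl rfl
      have e1 : S.wit (S.p1 (S.D X) ≫ S.p0 X) (S.p1 (S.D X) ≫ S.p1 X)
          = S.p1 (S.D X) := wit_unique' rfl rfl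
      have hp0 : S.Summable (S.p0 (S.D X) ≫ S.p0 X) (S.p0 (S.D X) ≫ S.p1 X) :=
        ⟨S.p0 (S.D X), rfl, rfl⟩
      have hp1 : S.Summable (S.p1 (S.D X) ≫ S.p0 X) (S.p1 (S.D X) ≫ S.p1 X) :=
        ⟨S.p1 (S.D X), rfl, rfl⟩
      have hadd0 : S.add (S.p0 (S.D X) ≫ S.p0 X) (S.p0 (S.D X) ≫ S.p1 X)
          = S.p0 (S.D X) ≫ S.s X := add_eq' rfl rfl
      have hadd1 : S.add (S.p1 (S.D X) ≫ S.p0 X) (S.p1 (S.D X) ≫ S.p1 X)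
          = S.p1 (S.D X) ≫ S.s X := add_eq' rfl rfl
      obtain ⟨hp01, -⟩ := summable_comm' hS (hS.2.1 (S.D X)).1
      obtain ⟨hsums, -⟩ := (hS.1.2.2 X).2 (S.D (S.D X)) _ _ hp01
      have hbig : S.Summable
          (S.add (S.p0 (S.D X) ≫ S.p0 X) (S.p0 (S.D X) ≫ S.p1 X))
          (S.add (S.p1 (S.D X) ≫ S.p0 X) (S.p1 (S.D X) ≫ S.p1 X)) := by
        rw [hadd0, hadd1]
        exact hsums
      obtain ⟨t, hms⟩ := pair_to_msummable hS hp0 hp1 hbig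
      have key := h3 X Y (S.D (S.D X)) f
        (S.p0 (S.D X) ≫ S.p0 X) (S.p0 (S.D X) ≫ S.p1 X)
        (S.p1 (S.D X) ≫ S.p0 X) (S.p1 (S.D X) ≫ S.p1 X) ⟨t, hms⟩
      rw [e0, e1] at key
      have eid : S.wit (S.p0 (S.D X)) (S.p1 (S.D X)) = 𝟙 (S.D (S.D X)) :=
        wit_unique' (Category.id_comp _) (Category.id_comp _)
      rw [eid, Category.id_comp] at key
      exact key.symm
end

section
/- Let C be a cartesian category equipped with a left summability structure (D, π₀, π₁, σ) in which the product projections p₀ ∈ C(X₀ & X₁, X₀) and p₁ ∈ C(X₀ & X₁, X₁) are additive, and let c& := ⟪⟨p₀ ∘ π₀, p₀ ∘ π₁⟩, ⟨p₁ ∘ π₀, p₁ ∘ π₁⟩⟫ ∈ C(D(X₀ & X₁), D X₀ & D X₁). Then the following are equivalent: (1) c& is an isomorphism; (2) (π₀ & π₀) ⊞ (π₁ & π₁) in C(D X₀ & D X₁, X₀ & X₁); (3) for any f₀, g₀ ∈ C(X, Y₀) and f₁, g₁ ∈ C(X', Y₁), if f₀ ⊞ g₀ and f₁ ⊞ g₁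 then (f₀ & f₁) ⊞ (g₀ & g₁); (4) for any f₀, g₀ ∈ C(X, Y₀) and f₁, g₁ ∈ C(X, Y₁), if f₀ ⊞ g₀ and f₁ ⊞ g₁ then ⟪f₀, f₁⟫ ⊞ ⟪g₀, g₁⟫. Moreover, in that case the inverse of c& is the witness ⟨π₀ & π₀, π₁ & π₁⟩. -/
open CategoryTheory CategoryTheory.Limits
open scoped Classical

universe v u

/-- the canonical morphism `c& : D(X₀ & X₁) ⟶ D X₀ & D X₁`,
i.e. `⟪⟨p₀ ∘ π₀, p₀ ∘ π₁⟩, ⟨p₁ ∘ π₀, p₁ ∘ π₁⟩⟫` -/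
noncomputable def SummablePairing.cAnd {C : Type u} [Category.{v} C] [HasBinaryProducts C]
    (S : SummablePairing C) (X₀ X₁ : C) : S.D (X₀ ⨯ X₁) ⟶ S.D X₀ ⨯ S.D X₁ :=
  prod.lift
    (S.wit (S.p0 (X₀ ⨯ X₁) ≫ prod.fst) (S.p1 (X₀ ⨯ X₁) ≫ prod.fst))
    (S.wit (S.p0 (X₀ ⨯ X₁) ≫ prod.snd) (S.p1 (X₀ ⨯ X₁) ≫ prod.snd))

namespace SummablePairing

variable {C : Type u} [Category.{v} C]

lemma wit_p0 (S : SummablePairing C) {X Y : C} {f0 f1 : X ⟶ Y} (h : S.Summable f0 f1) :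
    S.wit f0 f1 ≫ S.p0 Y = f0 := by
  unfold wit; rw [dif_pos h]; exact h.choose_spec.1

lemma wit_p1 (S : SummablePairing C) {X Y : C} {f0 f1 : X ⟶ Y} (h : S.Summable f0 f1) :
    S.wit f0 f1 ≫ S.p1 Y = f1 := by
  unfold wit; rw [dif_pos h]; exact h.choose_spec.2

lemma summable_precomp (S : SummablePairing C) {X Y Z : C} (h : Z ⟶ X) {f0 f1 : X ⟶ Y}
    (hs : S.Summable f0 f1) : S.Summable (h ≫ f0) (h ≫ f1) :=
  ⟨h ≫ S.wit f0 f1, by rw [Category.assoc, S.wit_p0 hs], by rw [Category.assoc, S.wit_p1 hs]⟩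

lemma summable_p0_p1 (S : SummablePairing C) (X : C) : S.Summable (S.p0 X) (S.p1 X) :=
  ⟨𝟙 _, Category.id_comp _, Category.id_comp _⟩

section Cart

variable [HasBinaryProducts C] (S : SummablePairing C)

lemma summable_fst (hp0 : ∀ X Y : C, S.Additive (prod.fst : X ⨯ Y ⟶ X)) (X₀ X₁ : C) :
    S.Summable (S.p0 (X₀ ⨯ X₁) ≫ prod.fst) (S.p1 (X₀ ⨯ X₁) ≫ prod.fst) :=
  ((hp0 X₀ X₁).2 _ _ _ (S.summable_p0_p1 _)).1

lemma summable_snd (hp1 : ∀ X Y : C, S.Additive (prod.snd : X ⨯ Y ⟶ Y)) (X₀ X₁ : C) :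
    S.Summable (S.p0 (X₀ ⨯ X₁) ≫ prod.snd) (S.p1 (X₀ ⨯ X₁) ≫ prod.snd) :=
  ((hp1 X₀ X₁).2 _ _ _ (S.summable_p0_p1 _)).1

lemma cAnd_comp_map_p0 (hp0 : ∀ X Y : C, S.Additive (prod.fst : X ⨯ Y ⟶ X))
    (hp1 : ∀ X Y : C, S.Additive (prod.snd : X ⨯ Y ⟶ Y)) (X₀ X₁ : C) :
    S.cAnd X₀ X₁ ≫ prod.map (S.p0 X₀) (S.p0 X₁) = S.p0 (X₀ ⨯ X₁) := by
  apply Limits.prod.hom_ext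
  · rw [Category.assoc, prod.map_fst, ← Category.assoc, cAnd, prod.lift_fst,
      S.wit_p0 (S.summable_fst hp0 X₀ X₁)]
  · rw [Category.assoc, prod.map_snd, ← Category.assoc, cAnd, prod.lift_snd,
      S.wit_p0 (S.summable_snd hp1 X₀ X₁)]

lemma cAnd_comp_map_p1 (hp0 : ∀ X Y : C, S.Additive (prod.fst : X ⨯ Y ⟶ X))
    (hp1 : ∀ X Y : C, S.Additive (prod.snd : X ⨯ Y ⟶ Y)) (X₀ X₁ : C) :
    S.cAnd X₀ X₁ ≫ prod.map (S.p1 X₀) (S.p1 X₁) = S.p1 (X₀ ⨯ X₁) := by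
  apply Limits.prod.hom_ext
  · rw [Category.assoc, prod.map_fst, ← Category.assoc, cAnd, prod.lift_fst,
      S.wit_p1 (S.summable_fst hp0 X₀ X₁)]
  · rw [Category.assoc, prod.map_snd, ← Category.assoc, cAnd, prod.lift_snd,
      S.wit_p1 (S.summable_snd hp1 X₀ X₁)]

end Cart

end SummablePairing

/-- characterizations of the compatibility of a left summability
structure with the cartesian product, via the morphism `c&`. -/
theorem stmt18 {C : Type u} [Category.{v} C] [HasBinaryProducts C]
    (S : SummablePairing C) (hS : S.IsLeftSummability)
    (hp0 : ∀ X Y : C, S.Additive (prod.fst : X ⨯ Y ⟶ X))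
    (hp1 : ∀ X Y : C, S.Additive (prod.snd : X ⨯ Y ⟶ Y)) :
    ((∀ X₀ X₁ : C, IsIso (S.cAnd X₀ X₁)) ↔
      (∀ X₀ X₁ : C,
        S.Summable (prod.map (S.p0 X₀) (S.p0 X₁)) (prod.map (S.p1 X₀) (S.p1 X₁)))) ∧
    ((∀ X₀ X₁ : C,
        S.Summable (prod.map (S.p0 X₀) (S.p0 X₁)) (prod.map (S.p1 X₀) (S.p1 X₁))) ↔
      (∀ (X X' Y₀ Y₁ : C) (f0 g0 : X ⟶ Y₀) (f1 g1 : X' ⟶ Y₁),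
        S.Summable f0 g0 → S.Summable f1 g1 →
        S.Summable (prod.map f0 f1) (prod.map g0 g1))) ∧
    ((∀ (X X' Y₀ Y₁ : C) (f0 g0 : X ⟶ Y₀) (f1 g1 : X' ⟶ Y₁),
        S.Summable f0 g0 → S.Summable f1 g1 →
        S.Summable (prod.map f0 f1) (prod.map g0 g1)) ↔
      (∀ (X Y₀ Y₁ : C) (f0 g0 : X ⟶ Y₀) (f1 g1 : X ⟶ Y₁),
        S.Summable f0 g0 → S.Summable f1 g1 →
        S.Summable (prod.lift f0 f1) (prod.lift g0 g1))) ∧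
    ((∀ X₀ X₁ : C,
        S.Summable (prod.map (S.p0 X₀) (S.p0 X₁)) (prod.map (S.p1 X₀) (S.p1 X₁))) →
      ∀ X₀ X₁ : C,
        S.cAnd X₀ X₁ ≫
            S.wit (prod.map (S.p0 X₀) (S.p0 X₁)) (prod.map (S.p1 X₀) (S.p1 X₁)) =
          𝟙 (S.D (X₀ ⨯ X₁)) ∧
        S.wit (prod.map (S.p0 X₀) (S.p0 X₁)) (prod.map (S.p1 X₀) (S.p1 X₁)) ≫
            S.cAnd X₀ X₁ =
          𝟙 (S.D X₀ ⨯ S.D X₁)) := by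
  -- the two-sided inverse property, given statement (2)
  have hinv : ∀ (X₀ X₁ : C),
      S.Summable (prod.map (S.p0 X₀) (S.p0 X₁)) (prod.map (S.p1 X₀) (S.p1 X₁)) →
      S.cAnd X₀ X₁ ≫
          S.wit (prod.map (S.p0 X₀) (S.p0 X₁)) (prod.map (S.p1 X₀) (S.p1 X₁)) =
        𝟙 (S.D (X₀ ⨯ X₁)) ∧
      S.wit (prod.map (S.p0 X₀) (S.p0 X₁)) (prod.map (S.p1 X₀) (S.p1 X₁)) ≫
          S.cAnd X₀ X₁ = 𝟙 (S.D X₀ ⨯ S.D X₁) := by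
    intro X₀ X₁ h2
    set W := S.wit (prod.map (S.p0 X₀) (S.p0 X₁)) (prod.map (S.p1 X₀) (S.p1 X₁)) with hWdef
    have hW0 : W ≫ S.p0 _ = prod.map (S.p0 X₀) (S.p0 X₁) := S.wit_p0 h2
    have hW1 : W ≫ S.p1 _ = prod.map (S.p1 X₀) (S.p1 X₁) := S.wit_p1 h2
    constructor
    · apply S.jointly_monic
      · rw [Category.assoc, hW0, Category.id_comp, S.cAnd_comp_map_p0 hp0 hp1]
      · rw [Category.assoc, hW1, Category.id_comp, S.cAnd_comp_map_p1 hp0 hp1]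
    · apply Limits.prod.hom_ext
      · simp only [SummablePairing.cAnd, Category.assoc, prod.lift_fst, Category.id_comp]
        apply S.jointly_monic
        · rw [Category.assoc, S.wit_p0 (S.summable_fst hp0 X₀ X₁), ← Category.assoc, hW0,
            prod.map_fst]
        · rw [Category.assoc, S.wit_p1 (S.summable_fst hp0 X₀ X₁), ← Category.assoc, hW1,
            prod.map_fst]
      · simp only [SummablePairing.cAnd, Category.assoc, prod.lift_snd, Category.id_comp]
        apply S.jointly_monic
        · rw [Category.assoc, S.wit_p0 (S.summable_snd hp1 X₀ X₁), ← Category.assoc, hW0,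
            prod.map_snd]
        · rw [Category.assoc, S.wit_p1 (S.summable_snd hp1 X₀ X₁), ← Category.assoc, hW1,
            prod.map_snd]
  refine ⟨⟨?_, ?_⟩, ⟨?_, ?_⟩, ⟨?_, ?_⟩, fun h2 X₀ X₁ => hinv X₀ X₁ (h2 X₀ X₁)⟩
  · -- (1) → (2)
    intro h X₀ X₁
    haveI := h X₀ X₁
    refine ⟨inv (S.cAnd X₀ X₁), ?_, ?_⟩
    · rw [IsIso.inv_comp_eq]
      exact (S.cAnd_comp_map_p0 hp0 hp1 X₀ X₁).symm
    · rw [IsIso.inv_comp_eq]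
      exact (S.cAnd_comp_map_p1 hp0 hp1 X₀ X₁).symm
  · -- (2) → (1)
    intro h2 X₀ X₁
    obtain ⟨h1, h2'⟩ := hinv X₀ X₁ (h2 X₀ X₁)
    exact ⟨_, h1, h2'⟩
  · -- (2) → (3)
    intro h2 X X' Y₀ Y₁ f0 g0 f1 g1 hs0 hs1
    refine ⟨prod.map (S.wit f0 g0) (S.wit f1 g1) ≫
        S.wit (prod.map (S.p0 Y₀) (S.p0 Y₁)) (prod.map (S.p1 Y₀) (S.p1 Y₁)), ?_, ?_⟩
    · rw [Category.assoc, S.wit_p0 (h2 Y₀ Y₁), prod.map_map, S.wit_p0 hs0, S.wit_p0 hs1]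
    · rw [Category.assoc, S.wit_p1 (h2 Y₀ Y₁), prod.map_map, S.wit_p1 hs0, S.wit_p1 hs1]
  · -- (3) → (2)
    intro h3 X₀ X₁
    exact h3 _ _ _ _ _ _ _ _ (S.summable_p0_p1 X₀) (S.summable_p0_p1 X₁)
  · -- (3) → (4)
    intro h3 X Y₀ Y₁ f0 g0 f1 g1 hs0 hs1
    have key : ∀ (a : X ⟶ Y₀) (b : X ⟶ Y₁),
        prod.lift (𝟙 X) (𝟙 X) ≫ prod.map a b = prod.lift a b := by
      intro a b; apply Limits.prod.hom_ext <;> simp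
    have := S.summable_precomp (prod.lift (𝟙 X) (𝟙 X))
      (h3 X X Y₀ Y₁ f0 g0 f1 g1 hs0 hs1)
    rwa [key, key] at this
  · -- (4) → (3)
    intro h4 X X' Y₀ Y₁ f0 g0 f1 g1 hs0 hs1
    have key : ∀ (a : X ⟶ Y₀) (b : X' ⟶ Y₁),
        prod.lift (prod.fst ≫ a) (prod.snd ≫ b) = prod.map a b := by
      intro a b; apply Limits.prod.hom_ext <;> simp
    have := h4 (X ⨯ X') Y₀ Y₁ _ _ _ _
      (S.summable_precomp prod.fst hs0) (S.summable_precomp prod.snd hs1)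
    rwa [key, key] at this
end
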